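/- Let E be a real Banach space, P ⊆ E a cone, D a cone metric on a nonempty set X with equivalent metric d(x,y) = inf{‖u‖ : u ∈ E, D(x,y) ≤ u}, T : X → X a map, and β ∈ (0,1). Suppose for all x, y ∈ X there exists u ∈ {D(x,y), (1/2)·(D(x,Tx) + D(y,Ty)), (1/2)·(D(x,Ty) + D(y,Tx))} such that D(Tx,Ty) ≤ β·u. Then for all x, y ∈ X, d(Tx,Ty) ≤ β·max{d(x,y), (1/2)·(d(x,Tx) + d(y,Ty)), (1/2)·(d(x,Ty) + d(y,Tx))}. -/
import Mathlib

/-- `P` is a cone in the real Banach space `E`. -/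
def IsCone {E : Type*} [NormedAddCommGroup E] [NormedSpace ℝ E] (P : Set E) : Prop :=
  IsClosed P ∧ P.Nonempty ∧ P ≠ {0} ∧
  (∀ a b : ℝ, 0 ≤ a → 0 ≤ b → ∀ x ∈ P, ∀ y ∈ P, a • x + b • y ∈ P) ∧
  (∀ x ∈ P, -x ∈ P → x = 0)

/-- The partial order induced by the cone `P`: `x ≤ y` iff `y - x ∈ P`. -/
def coneLE {E : Type*} [NormedAddCommGroup E] [NormedSpace ℝ E] (P : Set E) (x y : E) : Prop :=
  y - x ∈ P

/-- `D : X → X → E` is a cone metric with respect to the cone `P`. -/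
def IsConeMetric {E X : Type*} [NormedAddCommGroup E] [NormedSpace ℝ E]
    (P : Set E) (D : X → X → E) : Prop :=
  (∀ x y, coneLE P 0 (D x y)) ∧
  (∀ x y : X, D x y = 0 ↔ x = y) ∧
  (∀ x y, D x y = D y x) ∧
  (∀ x y z, coneLE P (D x y) (D x z + D z y))

/-- The equivalent (real-valued) metric of the cone metric `D`:
`d(x,y) = inf {‖u‖ : D x y ≤ u}`. -/
noncomputable def eqMetric {E X : Type*} [NormedAddCommGroup E] [NormedSpace ℝ E]
    (P : Set E) (D : X → X → E) (x y : X) : ℝ :=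
  sInf {r : ℝ | ∃ u : E, coneLE P (D x y) u ∧ ‖u‖ = r}

section aux
variable {E X : Type*} [NormedAddCommGroup E] [NormedSpace ℝ E]
  {P : Set E}

lemma cone_add_mem (hP : IsCone P) {u v : E} (hu : u ∈ P) (hv : v ∈ P) : u + v ∈ P := by
  have := hP.2.2.2.1 1 1 zero_le_one zero_le_one u hu v hv
  simpa using this

lemma cone_smul_mem (hP : IsCone P) {a : ℝ} (ha : 0 ≤ a) {u : E} (hu : u ∈ P) : a • u ∈ P := by
  have := hP.2.2.2.1 a 0 ha le_rfl u hu u hu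
  simpa using this

lemma coneLE_trans (hP : IsCone P) {x y z : E} (h1 : coneLE P x y) (h2 : coneLE P y z) : coneLE P x z := by
  have := cone_add_mem hP h1 h2
  simpa [coneLE, sub_add_sub_cancel'] using this

lemma coneLE_add (hP : IsCone P) {x y x' y' : E} (h1 : coneLE P x x') (h2 : coneLE P y y') :
    coneLE P (x + y) (x' + y') := by
  have := cone_add_mem hP h1 h2
  unfold coneLE at *
  convert this using 1
  abel

lemma coneLE_smul (hP : IsCone P) {a : ℝ} (ha : 0 ≤ a) {x y : E} (h1 : coneLE P x y) :
    coneLE P (a • x) (a • y) := by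
  have := cone_smul_mem hP ha h1
  simpa [coneLE, smul_sub] using this

variable {D : X → X → E}

lemma eqMetric_set_nonempty (hP : IsCone P) (x y : X) :
    {r : ℝ | ∃ u : E, coneLE P (D x y) u ∧ ‖u‖ = r}.Nonempty := by
  refine ⟨‖D x y‖, D x y, ?_, rfl⟩
  obtain ⟨e, he⟩ := hP.2.1
  have := hP.2.2.2.1 0 0 le_rfl le_rfl e he e he
  simpa [coneLE] using this

lemma eqMetric_set_bddBelow (x y : X) :
    BddBelow {r : ℝ | ∃ u : E, coneLE P (D x y) u ∧ ‖u‖ = r} := by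
  exact ⟨0, fun r ⟨u, _, hu⟩ => hu ▸ norm_nonneg u⟩

lemma eqMetric_le {x y : X} {u : E} (hu : coneLE P (D x y) u) :
    eqMetric P D x y ≤ ‖u‖ :=
  csInf_le (eqMetric_set_bddBelow x y) ⟨u, hu, rfl⟩

lemma exists_near (hP : IsCone P) (x y : X) {ε : ℝ} (hε : 0 < ε) :
    ∃ u : E, coneLE P (D x y) u ∧ ‖u‖ < eqMetric P D x y + ε := by
  obtain ⟨r, ⟨u, hu, hru⟩, hr⟩ :=
    Real.lt_sInf_add_pos (eqMetric_set_nonempty hP x y) hε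
  exact ⟨u, hu, hru ▸ hr⟩

end aux

theorem stmt13 {E X : Type*} [NormedAddCommGroup E] [NormedSpace ℝ E] [CompleteSpace E]
    [Nonempty X] (P : Set E) (hP : IsCone P)
    (D : X → X → E) (hD : IsConeMetric P D) (T : X → X)
    (β : ℝ) (hβ0 : 0 < β) (hβ1 : β < 1)
    (h : ∀ x y : X, ∃ u ∈ ({D x y,
        (2⁻¹ : ℝ) • (D x (T x) + D y (T y)),
        (2⁻¹ : ℝ) • (D x (T y) + D y (T x))} : Set E),
        coneLE P (D (T x) (T y)) (β • u)) :
    ∀ x y : X, eqMetric P D (T x) (T y) ≤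
      β * max (eqMetric P D x y)
              (max (2⁻¹ * (eqMetric P D x (T x) + eqMetric P D y (T y)))
                   (2⁻¹ * (eqMetric P D x (T y) + eqMetric P D y (T x)))) := by
  intro x y
  set M := max (eqMetric P D x y)
              (max (2⁻¹ * (eqMetric P D x (T x) + eqMetric P D y (T y)))
                   (2⁻¹ * (eqMetric P D x (T y) + eqMetric P D y (T x)))) with hM
  refine le_of_forall_pos_le_add (fun ε hε => ?_)
  obtain ⟨u, hu, hle⟩ := h x y
  have hβ0' : (0:ℝ) ≤ β := hβ0.le
  rcases hu with hu | hu | hu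
  · -- u = D x y
    subst hu
    obtain ⟨v, hv, hvn⟩ := exists_near hP (D := D) x y hε
    have h1 : coneLE P (D (T x) (T y)) (β • v) :=
      coneLE_trans hP hle (coneLE_smul hP hβ0' hv)
    have := eqMetric_le h1
    have hnorm : ‖β • v‖ = β * ‖v‖ := by
      rw [norm_smul, Real.norm_of_nonneg hβ0']
    calc eqMetric P D (T x) (T y) ≤ β * ‖v‖ := by rw [← hnorm]; exact this
      _ ≤ β * (eqMetric P D x y + ε) := by nlinarith
      _ = β * eqMetric P D x y + β * ε := by ring
      _ ≤ β * M + ε := by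
          have h2 : eqMetric P D x y ≤ M := le_max_left _ _
          nlinarith
  · -- u = half (D x Tx + D y Ty)
    subst hu
    obtain ⟨v₁, hv₁, hv₁n⟩ := exists_near hP (D := D) x (T x) hε
    obtain ⟨v₂, hv₂, hv₂n⟩ := exists_near hP (D := D) y (T y) hε
    have h1 : coneLE P (D (T x) (T y)) (β • ((2⁻¹:ℝ) • (v₁ + v₂))) :=
      coneLE_trans hP hle (coneLE_smul hP hβ0'
        (coneLE_smul hP (by norm_num) (coneLE_add hP hv₁ hv₂)))
    have := eqMetric_le h1
    have hnorm : ‖β • ((2⁻¹:ℝ) • (v₁ + v₂))‖ ≤ β * (2⁻¹ * (‖v₁‖ + ‖v₂‖)) := by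
      rw [norm_smul, norm_smul, Real.norm_of_nonneg hβ0']
      have := norm_add_le v₁ v₂
      have : ‖(2⁻¹:ℝ)‖ = 2⁻¹ := by norm_num
      rw [this]
      nlinarith [norm_add_le v₁ v₂]
    have h2 : 2⁻¹ * (eqMetric P D x (T x) + eqMetric P D y (T y)) ≤ M :=
      le_trans (le_max_left _ _) (le_max_right _ _)
    calc eqMetric P D (T x) (T y) ≤ β * (2⁻¹ * (‖v₁‖ + ‖v₂‖)) := le_trans this hnorm
      _ ≤ β * (2⁻¹ * (eqMetric P D x (T x) + eqMetric P D y (T y))) + β * ε := by nlinarith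
      _ ≤ β * M + ε := by nlinarith
  · -- u = half (D x Ty + D y Tx)
    subst hu
    obtain ⟨v₁, hv₁, hv₁n⟩ := exists_near hP (D := D) x (T y) hε
    obtain ⟨v₂, hv₂, hv₂n⟩ := exists_near hP (D := D) y (T x) hε
    have h1 : coneLE P (D (T x) (T y)) (β • ((2⁻¹:ℝ) • (v₁ + v₂))) :=
      coneLE_trans hP hle (coneLE_smul hP hβ0'
        (coneLE_smul hP (by norm_num) (coneLE_add hP hv₁ hv₂)))
    have := eqMetric_le h1
    have hnorm : ‖β • ((2⁻¹:ℝ) • (v₁ + v₂))‖ ≤ β * (2⁻¹ * (‖v₁‖ + ‖v₂‖)) := by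
      rw [norm_smul, norm_smul, Real.norm_of_nonneg hβ0']
      have : ‖(2⁻¹:ℝ)‖ = 2⁻¹ := by norm_num
      rw [this]
      nlinarith [norm_add_le v₁ v₂]
    have h2 : 2⁻¹ * (eqMetric P D x (T y) + eqMetric P D y (T x)) ≤ M :=
      le_trans (le_max_right _ _) (le_max_right _ _)
    calc eqMetric P D (T x) (T y) ≤ β * (2⁻¹ * (‖v₁‖ + ‖v₂‖)) := le_trans this hnorm
      _ ≤ β * (2⁻¹ * (eqMetric P D x (T y) + eqMetric P D y (T x))) + β * ε := by nlinarith
      _ ≤ β * M + ε := by nlinarith
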